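/- arXiv:2204.08740 — 3 statements merged into one kernel-verified Lean document; each statement's English description precedes it below -/
import Mathlib

section
/- Consider a finite strictly competitive two-player strategic game H that has a Nash equilibrium, and let H^1 be a subgame of H obtained by eliminating some (not necessarily all) strategies that are weakly dominated in H. Then H^1 has a Nash equilibrium, and for each player i ∈ {1,2}, maxmin_i(H) = maxmin_i(H^1). -/
/-- A two-player strategic game `(p1, p2)` is strictly competitive. -/
def StrictlyCompetitive {S1 S2 : Type} (p1 p2 : S1 → S2 → ℝ) : Prop :=
  ∀ (a : S1) (b : S2) (a' : S1) (b' : S2),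
    (p1 a b ≥ p1 a' b' ↔ p2 a b ≤ p2 a' b') ∧
    (p2 a b ≥ p2 a' b' ↔ p1 a b ≤ p1 a' b')

/-- `maxmin` of player 1 in the game restricted to strategy sets `A, B`. -/
noncomputable def maxmin1 {S1 S2 : Type} (p1 : S1 → S2 → ℝ) (A : Set S1) (B : Set S2) : ℝ :=
  sSup ((fun a : S1 => sInf ((fun b : S2 => p1 a b) '' B)) '' A)

/-- `maxmin` of player 2 in the game restricted to strategy sets `A, B`. -/
noncomputable def maxmin2 {S1 S2 : Type} (p2 : S1 → S2 → ℝ) (A : Set S1) (B : Set S2) : ℝ :=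
  sSup ((fun b : S2 => sInf ((fun a : S1 => p2 a b) '' A)) '' B)


lemma exists_undominated {α β : Type} [Fintype α] [Fintype β] (f : α → β → ℝ) (a : α) :
    ∃ t : α, (∀ y, f a y ≤ f t y) ∧
      ∀ s : α, (∀ y, f t y ≤ f s y) → ¬ ∃ y, f t y < f s y := by
  classical
  obtain ⟨t, ht, hmax⟩ := Finset.exists_max_image
    (Finset.univ.filter (fun t => ∀ y, f a y ≤ f t y)) (fun t => ∑ y, f t y)
    ⟨a, by simp⟩
  simp only [Finset.mem_filter, Finset.mem_univ, true_and] at ht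
  refine ⟨t, ht, fun s hs ⟨y0, hy0⟩ => ?_⟩
  have hsmem : s ∈ Finset.univ.filter (fun t => ∀ y, f a y ≤ f t y) := by
    simp only [Finset.mem_filter, Finset.mem_univ, true_and]
    exact fun y => (ht y).trans (hs y)
  have hlt : ∑ y, f t y < ∑ y, f s y :=
    Finset.sum_lt_sum (fun y _ => hs y) ⟨y0, Finset.mem_univ _, hy0⟩
  exact absurd (hmax s hsmem) (not_le.mpr hlt)

lemma maxmin1_eq_val {S1 S2 : Type} [Fintype S1] [Fintype S2]
    (p1 : S1 → S2 → ℝ) (A : Set S1) (B : Set S2) (v : ℝ)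
    (a : S1) (ha : a ∈ A) (b : S2) (hb : b ∈ B)
    (h1 : ∀ b' ∈ B, v ≤ p1 a b') (h2 : ∀ a' ∈ A, p1 a' b ≤ v) :
    maxmin1 p1 A B = v := by
  unfold maxmin1
  apply le_antisymm
  · apply csSup_le ((Set.nonempty_of_mem ha).image _)
    rintro x ⟨a', ha', rfl⟩
    exact (csInf_le ((B.toFinite.image _).bddBelow) ⟨b, hb, rfl⟩).trans (h2 a' ha')
  · have hmem : sInf ((fun b : S2 => p1 a b) '' B)
        ∈ (fun a : S1 => sInf ((fun b : S2 => p1 a b) '' B)) '' A := ⟨a, ha, rfl⟩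
    refine le_trans ?_ (le_csSup ((A.toFinite.image _).bddAbove) hmem)
    apply le_csInf ((Set.nonempty_of_mem hb).image _)
    rintro x ⟨b', hb', rfl⟩
    exact h1 b' hb'

lemma maxmin2_eq_val {S1 S2 : Type} [Fintype S1] [Fintype S2]
    (p2 : S1 → S2 → ℝ) (A : Set S1) (B : Set S2) (v : ℝ)
    (a : S1) (ha : a ∈ A) (b : S2) (hb : b ∈ B)
    (h1 : ∀ a' ∈ A, v ≤ p2 a' b) (h2 : ∀ b' ∈ B, p2 a b' ≤ v) :
    maxmin2 p2 A B = v := by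
  unfold maxmin2
  apply le_antisymm
  · apply csSup_le ((Set.nonempty_of_mem hb).image _)
    rintro x ⟨b', hb', rfl⟩
    exact (csInf_le ((A.toFinite.image _).bddBelow) ⟨a, ha, rfl⟩).trans (h2 b' hb')
  · have hmem : sInf ((fun a : S1 => p2 a b) '' A)
        ∈ (fun b : S2 => sInf ((fun a : S1 => p2 a b) '' A)) '' B := ⟨b, hb, rfl⟩
    refine le_trans ?_ (le_csSup ((B.toFinite.image _).bddAbove) hmem)
    apply le_csInf ((Set.nonempty_of_mem ha).image _)
    rintro x ⟨a', ha', rfl⟩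
    exact h1 a' ha'

/-- Corollary: if a finite strictly competitive two-player game `H` has a Nash equilibrium
and `H¹ = (A, B)` is obtained from `H` by eliminating some (not necessarily all) strategies
that are weakly dominated in `H`, then `H¹` has a Nash equilibrium as well, and the

`maxmin` values of both players are unchanged. -/
theorem elim_preserves_nash_and_maxmin {S1 S2 : Type}
    [Fintype S1] [Fintype S2] [Nonempty S1] [Nonempty S2]
    (p1 p2 : S1 → S2 → ℝ) (hsc : StrictlyCompetitive p1 p2)
    (hNE : ∃ (a : S1) (b : S2), (∀ a', p1 a b ≥ p1 a' b) ∧ (∀ b', p2 a b ≥ p2 a b'))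
    (A : Set S1) (B : Set S2)
    (hA : ∀ a : S1, a ∉ A → ∃ t : S1, (∀ y, p1 t y ≥ p1 a y) ∧ ∃ y, p1 t y > p1 a y)
    (hB : ∀ b : S2, b ∉ B → ∃ t : S2, (∀ x, p2 x t ≥ p2 x b) ∧ ∃ x, p2 x t > p2 x b) :
    (∃ a ∈ A, ∃ b ∈ B, (∀ a' ∈ A, p1 a b ≥ p1 a' b) ∧ (∀ b' ∈ B, p2 a b ≥ p2 a b')) ∧
    maxmin1 p1 Set.univ Set.univ = maxmin1 p1 A B ∧
    maxmin2 p2 Set.univ Set.univ = maxmin2 p2 A B := by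

  classical
  obtain ⟨a0, b0, hNa, hNb⟩ := hNE
  have ga : ∀ b', p1 a0 b0 ≤ p1 a0 b' := fun b' => ((hsc a0 b0 a0 b').2).mp (hNb b')
  have gb : ∀ a', p2 a0 b0 ≤ p2 a' b0 := fun a' => ((hsc a0 b0 a' b0).1).mp (hNa a')
  obtain ⟨aA, hdomA, hmaxA⟩ := exists_undominated p1 a0
  have haA : aA ∈ A := by
    by_contra h
    obtain ⟨t, ht1, ht2⟩ := hA aA h
    exact hmaxA t ht1 ht2
  obtain ⟨bB, hdomB, hmaxB⟩ := exists_undominated (fun b a => p2 a b) b0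
  have hbB : bB ∈ B := by
    by_contra h
    obtain ⟨t, ht1, ht2⟩ := hB bB h
    exact hmaxB t ht1 ht2
  have key1 : ∀ b', p1 a0 b0 ≤ p1 aA b' := fun b' => (ga b').trans (hdomA b')
  have key2 : ∀ a', p2 a0 b0 ≤ p2 a' bB := fun a' => (gb a').trans (hdomB a')
  have le1 : ∀ a', p1 a' bB ≤ p1 a0 b0 := fun a' => ((hsc a' bB a0 b0).2).mp (key2 a')
  have le2 : ∀ b', p2 aA b' ≤ p2 a0 b0 := fun b' => ((hsc aA b' a0 b0).1).mp (key1 b')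
  have eq1 : p1 aA bB = p1 a0 b0 := le_antisymm (le1 aA) (key1 bB)
  have eq2 : p2 aA bB = p2 a0 b0 := le_antisymm (le2 bB) (key2 aA)
  refine ⟨⟨aA, haA, bB, hbB, fun a' _ => eq1.ge.trans' (le1 a'), 
    fun b' _ => eq2.ge.trans' (le2 b')⟩, ?_, ?_⟩
  · rw [maxmin1_eq_val p1 Set.univ Set.univ (p1 a0 b0) a0 (Set.mem_univ _) b0 (Set.mem_univ _)
      (fun b' _ => ga b') (fun a' _ => hNa a'),
      maxmin1_eq_val p1 A B (p1 a0 b0) aA haA bB hbB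
      (fun b' _ => key1 b') (fun a' _ => le1 a')]
  · rw [maxmin2_eq_val p2 Set.univ Set.univ (p2 a0 b0) a0 (Set.mem_univ _) b0 (Set.mem_univ _)
      (fun a' _ => gb a') (fun b' _ => hNb b'),
      maxmin2_eq_val p2 A B (p2 a0 b0) aA haA bB hbB
      (fun a' _ => key2 a') (fun b' _ => le2 b')]
end

section
/- Every finite extensive game G with perfect information without relevant ties can be solved by an iterated elimination of weakly dominated strategies: there exists a sequence of games starting from the strategic form Γ(G), each obtained from the previous by eliminating some weakly dominated strategies, ending in a trivial game that contains the unique subgame perfect equilibrium of G. -/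
/-- A finite extensive game with perfect information: a finite rooted tree whose
leaves carry an outcome for each player and whose internal nodes carry the player
to move and a nonempty finite family of children. -/
inductive ExtGame (ι : Type) : Type where
  | leaf : (ι → ℝ) → ExtGame ι
  | node : ι → (m : ℕ) → (Fin (m + 1) → ExtGame ι) → ExtGame ι

namespace ExtGame

variable {ι : Type}

/-- A strategy of player `i`: at every node where it is `i`'s turn, a choice of a child. -/
def Strategy (i : ι) : ExtGame ι → Type
  | .leaf _ => PUnit
  | .node j m children => (i = j → Fin (m + 1)) × ∀ c : Fin (m + 1), Strategy i (children c)

/-- The outcome (payoff vector) when every player follows his strategy. -/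
def outcome : (G : ExtGame ι) → (∀ i, G.Strategy i) → ι → ℝ
  | .leaf o, _ => o
  | .node j _ children, σ =>
      outcome (children ((σ j).1 rfl)) (fun i => (σ i).2 ((σ j).1 rfl))

/-- Nodes of the game tree, identified by the path from the root. -/
inductive Node : ExtGame ι → Type where
  | root (G : ExtGame ι) : Node G
  | child {j : ι} {m : ℕ} {children : Fin (m + 1) → ExtGame ι}
      (c : Fin (m + 1)) : Node (children c) → Node (.node j m children)

/-- The subgame rooted at a node. -/
def subgameAt : {G : ExtGame ι} → Node G → ExtGame ι
  | _, .root G => G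
  | _, .child c v => subgameAt v

/-- The joint strategy of the subgame rooted at `v` induced by a joint strategy. -/
def restrictProfile : {G : ExtGame ι} → (∀ i, G.Strategy i) → (v : Node G) →
    ∀ i, (subgameAt v).Strategy i
  | _, σ, .root _ => σ
  | _, σ, .child c v => restrictProfile (fun i => (σ i).2 c) v

/-- Nash equilibrium of (the strategic form of) an extensive game. -/
def NashEq [DecidableEq ι] (G : ExtGame ι) (σ : ∀ i, G.Strategy i) : Prop :=
  ∀ (i : ι) (t : G.Strategy i), G.outcome σ i ≥ G.outcome (Function.update σ i t) i

/-- Subgame perfect equilibrium: the induced joint strategy is a Nash equilibrium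
in the subgame rooted at every node. -/
def SPE [DecidableEq ι] (G : ExtGame ι) (σ : ∀ i, G.Strategy i) : Prop :=
  ∀ v : Node G, (subgameAt v).NashEq (restrictProfile σ v)

/-- At the root (if it is a non-leaf), the player to move chooses a child whose
subgame outcome (under the induced strategies) is maximal for him. -/
def BestAtRoot : (G : ExtGame ι) → (∀ i, G.Strategy i) → Prop
  | .leaf _, _ => True
  | .node j _ children, σ =>
      ∀ c, outcome (children ((σ j).1 rfl)) (fun i => (σ i).2 ((σ j).1 rfl)) j ≥
        outcome (children c) (fun i => (σ i).2 c) j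

/-- The list of payoff vectors at the leaves of the game tree (one entry per leaf). -/
def leavesList : ExtGame ι → List (ι → ℝ)
  | .leaf o => [o]
  | .node _ _ children => (List.ofFn fun c => leavesList (children c)).flatten

/-- The game is without relevant ties: at every non-leaf node `u` with `turn(u) = i`,
the outcome function of player `i` is injective on the leaves of the subtree rooted at `u`. -/
def NoRelevantTies : ExtGame ι → Prop
  | .leaf _ => True
  | .node j m children =>
      ((ExtGame.node j m children).leavesList.Pairwise fun o o' => o j ≠ o' j) ∧
      ∀ c, NoRelevantTies (children c)

/-- The player to move at a node (`none` if the node is a leaf). -/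
def turnAt {G : ExtGame ι} (v : Node G) : Option ι :=
  match subgameAt v with
  | .leaf _ => none
  | .node j _ _ => some j

end ExtGame


/-- In the strategic form of `G`, `t` weakly dominates `s` (strategies of player `i`) in the
game restricted to the strategy sets `A j`. -/
def WDomIn {n : ℕ} (G : ExtGame (Fin n)) (A : ∀ j, Set (G.Strategy j)) (i : Fin n)
    (t s : G.Strategy i) : Prop :=
  (∀ σ : ∀ j, G.Strategy j, (∀ j, j ≠ i → σ j ∈ A j) →
      G.outcome (Function.update σ i t) i ≥ G.outcome (Function.update σ i s) i) ∧
  (∃ σ : ∀ j, G.Strategy j, (∀ j, j ≠ i → σ j ∈ A j) ∧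
      G.outcome (Function.update σ i t) i > G.outcome (Function.update σ i s) i)

/-- `B` is obtained from `A` by one round of elimination of some (not necessarily all)
strategies that are weakly dominated in the game restricted to `A`. -/
def ElimStep {n : ℕ} (G : ExtGame (Fin n)) (A B : ∀ j, Set (G.Strategy j)) : Prop :=
  (∀ j, B j ⊆ A j) ∧
  (∀ (j : Fin n), ∀ s ∈ A j, s ∉ B j → ∃ t ∈ A j, WDomIn G A j t s)

/-!
Backward induction, carried out by eliminations. By induction every subgame has an
elimination sequence ending in a trivial game that contains its subgame perfect equilibria.
At a node these sequences are run simultaneously in all subtrees: a strategy that is weakly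
dominated in a subgame stays weakly dominated in the whole game when it is changed only
there. Once every subgame is trivial, the mover compares constant values of the children;
without relevant ties one child is strictly best, and one more round eliminates every
strategy of the mover entering another child. A subgame perfect equilibrium induces
equilibria of the subgames and, by the Nash condition at the root, enters the best child,
so it survives every round.
-/

open Function Set

namespace ExtGame

variable {ι : Type} {j : ι} {m : ℕ} {children : Fin (m + 1) → ExtGame ι}

theorem outcome_mem_leavesList : ∀ (G : ExtGame ι) (σ : ∀ i, G.Strategy i),
    G.outcome σ ∈ G.leavesList
  | .leaf _, _ => List.mem_singleton_self _
  | .node j _ _, σ =>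
      List.mem_flatten.2 ⟨_, List.mem_ofFn.2 ⟨(σ j).1 rfl, rfl⟩, outcome_mem_leavesList _ _⟩

theorem ne_of_mem_leavesList
    (hpw : (node j m children).leavesList.Pairwise fun o o' => o j ≠ o' j)
    {c c' : Fin (m + 1)} (hcc : c ≠ c') {x y : ι → ℝ}
    (hx : x ∈ (children c).leavesList) (hy : y ∈ (children c').leavesList) : x j ≠ y j := by
  rw [leavesList, List.pairwise_flatten, List.pairwise_ofFn] at hpw
  rcases hcc.lt_or_gt with hlt | hlt
  · exact hpw.2 hlt x hx y hy
  · exact (hpw.2 hlt y hy x hx).symm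

theorem exists_forall_lt_of_leavesList_pairwise
    (hpw : (node j m children).leavesList.Pairwise fun o o' => o j ≠ o' j)
    {w : Fin (m + 1) → ι → ℝ} (hw : ∀ c, w c ∈ (children c).leavesList) :
    ∃ cs, ∀ c ≠ cs, w c j < w cs j := by
  obtain ⟨cs, hcs⟩ := Finite.exists_max fun c => w c j
  exact ⟨cs, fun c hc => (hcs c).lt_of_ne (ne_of_mem_leavesList hpw hc (hw c) (hw cs))⟩

def rootMove (σ : ∀ i, (node j m children).Strategy i) : Fin (m + 1) :=
  (σ j).1 rfl

def subProfile (σ : ∀ i, (node j m children).Strategy i) (c : Fin (m + 1)) :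
    ∀ i, (children c).Strategy i :=
  fun i => (σ i).2 c

theorem outcome_node_eq (σ : ∀ i, (node j m children).Strategy i) :
    (node j m children).outcome σ = (children (rootMove σ)).outcome (subProfile σ (rootMove σ)) :=
  rfl

section Deviation

variable [DecidableEq ι] (σ : ∀ i, (node j m children).Strategy i)

theorem subProfile_update (i : ι) (x : (node j m children).Strategy i) (c : Fin (m + 1)) :
    subProfile (update σ i x) c = update (subProfile σ c) i (x.2 c) := by
  funext i'
  rcases eq_or_ne i' i with rfl | hne
  · simp [subProfile]
  · simp [subProfile, update_of_ne hne]

theorem rootMove_update_self (x : (node j m children).Strategy j) :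
    rootMove (update σ j x) = x.1 rfl := by
  simp [rootMove]

theorem rootMove_update_of_ne {i : ι} (hij : i ≠ j) (x : (node j m children).Strategy i) :
    rootMove (update σ i x) = rootMove σ := by
  simp [rootMove, update_of_ne hij.symm]

theorem rootMove_update_congr {i : ι} {x y : (node j m children).Strategy i} (h : x.1 = y.1) :
    rootMove (update σ i x) = rootMove (update σ i y) := by
  by_cases hij : i = j
  · subst hij
    simp only [rootMove_update_self, h]
  · simp only [rootMove_update_of_ne σ hij]

theorem outcome_update_of_rootMove {i : ι} {x : (node j m children).Strategy i}
    {c : Fin (m + 1)} (hc : rootMove (update σ i x) = c) :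
    (node j m children).outcome (update σ i x) =
      (children c).outcome (update (subProfile σ c) i (x.2 c)) := by
  subst hc
  rw [outcome_node_eq, subProfile_update]

end Deviation

theorem SPE.nashEq [DecidableEq ι] {G : ExtGame ι} {σ : ∀ i, G.Strategy i} (h : G.SPE σ) :
    G.NashEq σ :=
  h (.root G)

theorem SPE.subProfile [DecidableEq ι] {σ : ∀ i, (node j m children).Strategy i}
    (h : (node j m children).SPE σ) (c : Fin (m + 1)) : (children c).SPE (subProfile σ c) :=
  fun v => h (.child c v)

/-- The mover's strategies are constrained only in the subtree they enter: the mover's choices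
in the other subtrees never affect the outcome, so they can never be eliminated. -/
def liftSets (j : ι) (A : ∀ c i, Set ((children c).Strategy i)) (C : Set (Fin (m + 1))) :
    ∀ i, Set ((node j m children).Strategy i) :=
  fun i => {s | (∀ h : i = j, s.1 h ∈ C ∧ s.2 (s.1 h) ∈ A (s.1 h) i) ∧
    (i ≠ j → ∀ c, s.2 c ∈ A c i)}

section LiftSets

variable {A B : ∀ c i, Set ((children c).Strategy i)} {C : Set (Fin (m + 1))}

theorem liftSets_univ :
    (liftSets j (fun _ _ => univ) univ : ∀ i, Set ((node j m children).Strategy i)) =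
      fun _ => univ := by
  funext i
  exact eq_univ_of_forall fun s => ⟨fun _ => ⟨mem_univ _, mem_univ _⟩, fun _ _ => mem_univ _⟩

theorem liftSets_mono (hAB : ∀ c i, B c i ⊆ A c i) {C' : Set (Fin (m + 1))} (hC : C' ⊆ C)
    (i : ι) : liftSets j B C' i ⊆ liftSets j A C i :=
  fun _ hs => ⟨fun h => ⟨hC (hs.1 h).1, hAB _ _ (hs.1 h).2⟩, fun h c => hAB c i (hs.2 h c)⟩

theorem rootMove_mem_of_mem_liftSets {σ : ∀ i, (node j m children).Strategy i}
    (hσ : ∀ i, σ i ∈ liftSets j A C i) : rootMove σ ∈ C :=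
  ((hσ j).1 rfl).1

theorem outcome_eq_of_mem_liftSets {w : Fin (m + 1) → ι → ℝ}
    (hw : ∀ c τ, (∀ i, τ i ∈ A c i) → (children c).outcome τ = w c)
    {σ : ∀ i, (node j m children).Strategy i} (hσ : ∀ i, σ i ∈ liftSets j A C i) :
    (node j m children).outcome σ = w (rootMove σ) := by
  refine hw _ _ fun i => ?_
  by_cases hij : i = j
  · subst hij
    exact ((hσ i).1 rfl).2
  · exact (hσ i).2 hij _

theorem subProfile_mem_of_mem_liftSets [DecidableEq ι] {σ : ∀ i, (node j m children).Strategy i}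
    {i : ι} (hσ : ∀ i' ≠ i, σ i' ∈ liftSets j A C i') {x : (node j m children).Strategy i}
    {c : Fin (m + 1)} (hc : rootMove (update σ i x) = c) :
    ∀ i' ≠ i, subProfile σ c i' ∈ A c i' := by
  intro i' hi'
  by_cases hij : i' = j
  · subst hij
    rw [rootMove_update_of_ne σ hi'.symm] at hc
    subst hc
    exact ((hσ i' hi').1 rfl).2
  · exact (hσ i' hi').2 hij c

theorem exists_mem_liftSets [DecidableEq ι] (hA : ∀ c i, (A c i).Nonempty) {c₀ : Fin (m + 1)}
    (hc₀ : c₀ ∈ C) (τ : ∀ i, (children c₀).Strategy i) :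
    ∃ σ : ∀ i, (node j m children).Strategy i, rootMove σ = c₀ ∧ subProfile σ c₀ = τ ∧
      ∀ i, τ i ∈ A c₀ i → σ i ∈ liftSets j A C i := by
  refine ⟨fun i => ⟨fun _ => c₀, update (fun c => (hA c i).some) c₀ (τ i)⟩, rfl, ?_,
    fun i hτ => ⟨fun _ => ⟨hc₀, by simpa⟩, fun _ c => ?_⟩⟩
  · funext i
    simp [subProfile]
  · rcases eq_or_ne c c₀ with rfl | hc
    · simpa
    · simpa [update_of_ne hc] using (hA c i).some_mem

end LiftSets

end ExtGame

open ExtGame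

theorem ElimStep.refl {n : ℕ} (G : ExtGame (Fin n)) (A : ∀ j, Set (G.Strategy j)) :
    ElimStep G A A :=
  ⟨fun _ => subset_rfl, fun _ _ hs hns => absurd hs hns⟩

section LiftElimStep

variable {n : ℕ} {j : Fin n} {m : ℕ} {children : Fin (m + 1) → ExtGame (Fin n)}
  {A B : ∀ c i, Set ((children c).Strategy i)}

theorem wDomIn_liftSets (hA : ∀ c i, (A c i).Nonempty) {i : Fin n}
    {s : (node j m children).Strategy i} {c₀ : Fin (m + 1)} (hc₀ : ∀ h : i = j, s.1 h = c₀)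
    {t₀ : (children c₀).Strategy i} (hdom : WDomIn (children c₀) (A c₀) i t₀ (s.2 c₀)) :
    WDomIn (node j m children) (liftSets j A univ) i ⟨s.1, update s.2 c₀ t₀⟩ s := by
  have hmove : ∀ σ, rootMove (update σ i ⟨s.1, update s.2 c₀ t₀⟩) = rootMove (update σ i s) :=
    fun σ => rootMove_update_congr σ rfl
  constructor
  · intro σ hσ
    obtain ⟨c, hc⟩ : ∃ c, rootMove (update σ i s) = c := ⟨_, rfl⟩
    rw [outcome_update_of_rootMove σ hc, outcome_update_of_rootMove σ ((hmove σ).trans hc)]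
    have hsub := subProfile_mem_of_mem_liftSets hσ hc
    rcases eq_or_ne c c₀ with rfl | hne
    · simpa using hdom.1 _ hsub
    · simp [update_of_ne hne]
  · obtain ⟨τ, hτ, hlt⟩ := hdom.2
    obtain ⟨σ, hσc₀, hστ, hσ⟩ := exists_mem_liftSets (C := univ) hA (mem_univ c₀) τ
    have hc : rootMove (update σ i s) = c₀ := by
      by_cases hij : i = j
      · subst hij
        rw [rootMove_update_self]
        exact hc₀ rfl
      · rw [rootMove_update_of_ne σ hij, hσc₀]
    refine ⟨σ, fun i' hi' => hσ i' (hτ i' hi'), ?_⟩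
    rw [outcome_update_of_rootMove σ hc, outcome_update_of_rootMove σ ((hmove σ).trans hc), hστ]
    simpa using hlt

theorem elimStep_liftSets (hA : ∀ c i, (A c i).Nonempty)
    (hAB : ∀ c, ElimStep (children c) (A c) (B c)) :
    ElimStep (node j m children) (liftSets j A univ) (liftSets j B univ) := by
  refine ⟨liftSets_mono (fun c => (hAB c).1) subset_rfl, fun i s hs hsB => ?_⟩
  obtain ⟨c₀, hc₀, hsA₀, hsB₀⟩ :
      ∃ c₀, (∀ h : i = j, s.1 h = c₀) ∧ s.2 c₀ ∈ A c₀ i ∧ s.2 c₀ ∉ B c₀ i := by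
    by_cases hij : i = j
    · subst hij
      exact ⟨s.1 rfl, fun _ => rfl, (hs.1 rfl).2,
        fun hB => hsB ⟨fun _ => ⟨mem_univ _, hB⟩, fun h => absurd rfl h⟩⟩
    · obtain ⟨c₀, hc₀⟩ : ∃ c, s.2 c ∉ B c i := by
        by_contra! hB
        exact hsB ⟨fun h => absurd h hij, fun _ => hB⟩
      exact ⟨c₀, fun h => absurd h hij, hs.2 hij c₀, hc₀⟩
  obtain ⟨t₀, ht₀, hdom⟩ := (hAB c₀).2 i _ hsA₀ hsB₀
  refine ⟨⟨s.1, update s.2 c₀ t₀⟩, ⟨fun h => ⟨mem_univ _, ?_⟩, fun h c => ?_⟩,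
    wDomIn_liftSets hA hc₀ hdom⟩
  · rw [hc₀ h]
    simpa using ht₀
  · rcases eq_or_ne c c₀ with rfl | hne
    · simpa using ht₀
    · simpa [update_of_ne hne] using hs.2 h c

theorem elimStep_liftSets_singleton (hA : ∀ c i, (A c i).Nonempty) {w : Fin (m + 1) → Fin n → ℝ}
    (hw : ∀ c τ, (∀ i, τ i ∈ A c i) → (children c).outcome τ = w c)
    {cs : Fin (m + 1)} (hcs : ∀ c ≠ cs, w c j < w cs j) :
    ElimStep (node j m children) (liftSets j A univ) (liftSets j A {cs}) := by
  refine ⟨liftSets_mono (fun _ _ => subset_rfl) (subset_univ _), fun i s hs hsC => ?_⟩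
  obtain rfl : i = j := by
    by_contra hij
    exact hsC ⟨fun h => absurd h hij, hs.2⟩
  have hs₁ : s.1 rfl ≠ cs := fun h => hsC ⟨fun _ => ⟨h, (hs.1 rfl).2⟩, hs.2⟩
  obtain ⟨x, hx⟩ := hA cs i
  let t : (node i m children).Strategy i := ⟨fun _ => cs, update s.2 cs x⟩
  have ht : t ∈ liftSets i A univ i :=
    ⟨fun _ => ⟨mem_univ _, by simpa [t] using hx⟩, fun h => absurd rfl h⟩
  have hlt : ∀ σ, (∀ i' ≠ i, σ i' ∈ liftSets i A univ i') →
      (node i m children).outcome (update σ i s) i <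
        (node i m children).outcome (update σ i t) i := by
    intro σ hσ
    rw [outcome_eq_of_mem_liftSets hw ((forall_update_iff σ fun i' s => s ∈ _).2 ⟨hs, hσ⟩),
      outcome_eq_of_mem_liftSets hw ((forall_update_iff σ fun i' s => s ∈ _).2 ⟨ht, hσ⟩),
      rootMove_update_self, rootMove_update_self]
    exact hcs _ hs₁
  obtain ⟨σ, -, -, hσ⟩ := exists_mem_liftSets (C := univ) hA (mem_univ cs) fun i => (hA cs i).some
  have hσ' : ∀ i', σ i' ∈ liftSets i A univ i' := fun i' => hσ i' (hA cs i').some_mem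
  exact ⟨t, ht, fun σ hσ => (hlt σ hσ).le, σ, fun i' _ => hσ' i', hlt σ fun i' _ => hσ' i'⟩

theorem rootMove_eq_of_spe {w : Fin (m + 1) → Fin n → ℝ}
    (hw : ∀ c τ, (∀ i, τ i ∈ A c i) → (children c).outcome τ = w c)
    {cs : Fin (m + 1)} (hcs : ∀ c ≠ cs, w c j < w cs j)
    (hspe : ∀ c τ, (children c).SPE τ → ∀ i, τ i ∈ A c i)
    {σ : ∀ i, (node j m children).Strategy i} (hσ : (node j m children).SPE σ) :
    rootMove σ = cs := by
  have hval : ∀ c, (children c).outcome (subProfile σ c) = w c :=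
    fun c => hw c _ (hspe c _ (hσ.subProfile c))
  let t : (node j m children).Strategy j := ⟨fun _ => cs, (σ j).2⟩
  have hdev : (node j m children).outcome (update σ j t) = w cs :=
    (outcome_update_of_rootMove σ (rootMove_update_self σ t)).trans
      ((congrArg _ (update_eq_self j (subProfile σ cs))).trans (hval cs))
  have hnash := hσ.nashEq j t
  rw [outcome_node_eq, hval, hdev] at hnash
  by_contra hne
  exact (hcs _ hne).not_ge hnash

theorem mem_liftSets_of_spe {w : Fin (m + 1) → Fin n → ℝ}
    (hw : ∀ c τ, (∀ i, τ i ∈ A c i) → (children c).outcome τ = w c)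
    {cs : Fin (m + 1)} (hcs : ∀ c ≠ cs, w c j < w cs j)
    (hspe : ∀ c τ, (children c).SPE τ → ∀ i, τ i ∈ A c i)
    {σ : ∀ i, (node j m children).Strategy i} (hσ : (node j m children).SPE σ) (i : Fin n) :
    σ i ∈ liftSets j A {cs} i := by
  refine ⟨fun h => ?_, fun _ c => hspe c _ (hσ.subProfile c) i⟩
  subst h
  exact ⟨rootMove_eq_of_spe hw hcs hspe hσ, hspe _ _ (hσ.subProfile _) i⟩

end LiftElimStep

/-- Stationarity after `length` lets the sequences of subgames of different lengths run
in parallel. -/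
structure IEWDSolution {n : ℕ} (G : ExtGame (Fin n)) where
  sets : ℕ → ∀ i, Set (G.Strategy i)
  length : ℕ
  sets_zero : sets 0 = fun _ => univ
  elimStep : ∀ k, ElimStep G (sets k) (sets (k + 1))
  sets_of_le : ∀ k, length ≤ k → sets k = sets length
  value : Fin n → ℝ
  outcome_eq : ∀ σ, (∀ i, σ i ∈ sets length i) → G.outcome σ = value
  nonempty : ∀ i, (sets length i).Nonempty
  spe_mem : ∀ σ, G.SPE σ → ∀ i, σ i ∈ sets length i

namespace IEWDSolution

variable {n : ℕ}

theorem sets_length_subset {G : ExtGame (Fin n)} (S : IEWDSolution G) (k : ℕ) (i : Fin n) :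
    S.sets S.length i ⊆ S.sets k i := by
  rcases le_total k S.length with hk | hk
  · exact antitone_nat_of_succ_le (f := S.sets) (fun k => (S.elimStep k).1) hk i
  · rw [S.sets_of_le k hk]

theorem nonempty_sets {G : ExtGame (Fin n)} (S : IEWDSolution G) (k : ℕ) (i : Fin n) :
    (S.sets k i).Nonempty :=
  (S.nonempty i).mono (S.sets_length_subset k i)

theorem value_mem_leavesList {G : ExtGame (Fin n)} (S : IEWDSolution G) :
    S.value ∈ G.leavesList :=
  S.outcome_eq _ (fun i => (S.nonempty i).some_mem) ▸ outcome_mem_leavesList G _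

def leaf (o : Fin n → ℝ) : IEWDSolution (leaf o) where
  sets _ _ := univ
  length := 0
  sets_zero := rfl
  elimStep _ := ElimStep.refl _ _
  sets_of_le _ _ := rfl
  value := o
  outcome_eq _ _ := rfl
  nonempty _ := ⟨PUnit.unit, mem_univ _⟩
  spe_mem _ _ _ := mem_univ _

theorem nonempty_node {j : Fin n} {m : ℕ} {children : Fin (m + 1) → ExtGame (Fin n)}
    (S : ∀ c, IEWDSolution (children c)) {cs : Fin (m + 1)}
    (hcs : ∀ c ≠ cs, (S c).value j < (S cs).value j) :
    Nonempty (IEWDSolution (node j m children)) := by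
  set K := Finset.univ.sup fun c => (S c).length
  have hfin : ∀ c k, K ≤ k → (S c).sets k = (S c).sets (S c).length := fun c k hk =>
    (S c).sets_of_le k ((Finset.le_sup (f := fun c => (S c).length) (Finset.mem_univ c)).trans hk)
  have hK : ∀ k, K ≤ k → (fun c => (S c).sets k) = fun c => (S c).sets K := fun k hk =>
    funext fun c => (hfin c k hk).trans (hfin c K le_rfl).symm
  have hw : ∀ c τ, (∀ i, τ i ∈ (S c).sets K i) → (children c).outcome τ = (S c).value :=
    fun c τ hτ => (S c).outcome_eq τ (hfin c K le_rfl ▸ hτ)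
  have hspe : ∀ c τ, (children c).SPE τ → ∀ i, τ i ∈ (S c).sets K i :=
    fun c τ hτ => hfin c K le_rfl ▸ (S c).spe_mem τ hτ
  have hA : ∀ k c i, ((S c).sets k i).Nonempty := fun k c => (S c).nonempty_sets k
  refine ⟨{
    sets := fun k => liftSets j (fun c => (S c).sets k) (if K < k then {cs} else univ)
    length := K + 1
    sets_zero := ?_
    elimStep := fun k => ?_
    sets_of_le := fun k hk => ?_
    value := (S cs).value
    outcome_eq := fun σ hσ => ?_
    nonempty := ?_
    spe_mem := fun σ hσ => ?_ }⟩
  · simp only [(S _).sets_zero, Nat.not_lt_zero, if_false]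
    exact liftSets_univ
  · rcases lt_trichotomy k K with hk | rfl | hk
    · rw [if_neg (by omega), if_neg (by omega)]
      exact elimStep_liftSets (hA k) fun c => (S c).elimStep k
    · rw [if_neg (lt_irrefl _), if_pos (Nat.lt_succ_self _), hK (K + 1) (Nat.le_succ _)]
      exact elimStep_liftSets_singleton (hA K) hw hcs
    · rw [if_pos hk, if_pos (by omega), hK k hk.le, hK (k + 1) (by omega)]
      exact ElimStep.refl _ _
  · simp only [if_pos (show K < k by omega), if_pos (Nat.lt_succ_self K), hK k (by omega),
      hK (K + 1) (Nat.le_succ _)]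
  · simp only [if_pos (Nat.lt_succ_self K), hK (K + 1) (Nat.le_succ _)] at hσ
    rw [outcome_eq_of_mem_liftSets hw hσ, rootMove_mem_of_mem_liftSets hσ]
  · simp only [if_pos (Nat.lt_succ_self K), hK (K + 1) (Nat.le_succ _)]
    intro i
    obtain ⟨σ, -, -, hσ⟩ := exists_mem_liftSets (j := j) (hA K) (mem_singleton cs) fun i =>
      (hA K cs i).some
    exact ⟨σ i, hσ i (hA K cs i).some_mem⟩
  · simp only [if_pos (Nat.lt_succ_self K), hK (K + 1) (Nat.le_succ _)]
    exact mem_liftSets_of_spe hw hcs hspe hσ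

theorem nonempty_of_noRelevantTies :
    ∀ G : ExtGame (Fin n), G.NoRelevantTies → Nonempty (IEWDSolution G)
  | .leaf o, _ => ⟨leaf o⟩
  | .node _ _ children, ⟨hpw, hch⟩ => by
    let S c := (nonempty_of_noRelevantTies (children c) (hch c)).some
    obtain ⟨cs, hcs⟩ :=
      exists_forall_lt_of_leavesList_pairwise hpw fun c => (S c).value_mem_leavesList
    exact nonempty_node S hcs

end IEWDSolution

/-- Every finite extensive game with perfect information without relevant ties can be solved
by an iterated elimination of weakly dominated strategies: starting from the strategic form
of `G`, there is a sequence of elimination rounds ending (after `k` steps) in a trivial game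
that contains the (unique) subgame perfect equilibrium of `G`. -/
theorem solvable_by_iewds {n : ℕ} (G : ExtGame (Fin n)) (h : G.NoRelevantTies) :
    ∃ (A : ℕ → ∀ j, Set (G.Strategy j)) (k : ℕ),
      (A 0 = fun _ => Set.univ) ∧
      (∀ m < k, ElimStep G (A m) (A (m + 1))) ∧
      (∀ σ τ : ∀ j, G.Strategy j, (∀ j, σ j ∈ A k j) → (∀ j, τ j ∈ A k j) →
        ∀ i : Fin n, G.outcome σ i = G.outcome τ i) ∧
      (∀ σ : ∀ j, G.Strategy j, G.SPE σ → ∀ j, σ j ∈ A k j) := by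
  obtain ⟨S⟩ := IEWDSolution.nonempty_of_noRelevantTies G h
  refine ⟨S.sets, S.length, S.sets_zero, fun k _ => S.elimStep k, fun σ τ hσ hτ i => ?_, S.spe_mem⟩
  rw [S.outcome_eq σ hσ, S.outcome_eq τ hτ]
end

section
/- Every finite extensive game with perfect information is weakly acyclic: for every joint strategy s of the game there exists a finite improvement path (in the strategic form) starting at s. -/
/-- A profitable deviation in the strategic form of `G`: some player `i` changes only his
own strategy and strictly increases his payoff. -/
def ProfDev {n : ℕ} (G : ExtGame (Fin n)) (σ τ : ∀ j, G.Strategy j) : Prop :=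
  ∃ i : Fin n, (∀ j, j ≠ i → τ j = σ j) ∧ G.outcome τ i > G.outcome σ i

/-!
Kukushkin's argument, by induction on the tree. At a node of player `j`, first let the players
improve inside the subgame `c` chosen by `j` until it is in equilibrium. From then on only `j`
can deviate profitably, by moving to another subgame `c₁`; the players then improve inside `c₁`
until it is in equilibrium too. If `j` ends up worse off than before the move, he moves back to
`c`, where nothing has changed. Either way `j` can never again gain by moving to `c₁`
(`StableOn j S` records the set `S` of such subgames), so after at most `m + 1` rounds no
profitable deviation is left.
-/

theorem Relation.ReflTransGen.exists_fin_path {α : Type*} {r : α → α → Prop} {a b : α}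
    (h : Relation.ReflTransGen r a b) :
    ∃ (k : ℕ) (f : Fin (k + 1) → α),
      f 0 = a ∧ f (Fin.last k) = b ∧ ∀ i : Fin k, r (f i.castSucc) (f i.succ) := by
  induction h using Relation.ReflTransGen.head_induction_on with
  | refl => exact ⟨0, fun _ => b, rfl, rfl, Fin.elim0⟩
  | @head x y hxy _ ih =>
    obtain ⟨k, f, hf0, hlast, hstep⟩ := ih
    refine ⟨k + 1, Fin.cons x f, rfl, hlast, Fin.cases ?_ fun i => ?_⟩
    · simpa only [Fin.castSucc_zero, Fin.cons_zero, Fin.cons_succ, hf0] using hxy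
    · simpa only [← Fin.succ_castSucc, Fin.cons_succ] using hstep i

theorem Function.update_eq_update_of_forall_ne {α : Type*} [DecidableEq α] {β : α → Type*}
    {f g : ∀ a, β a} {a : α} (h : ∀ b, b ≠ a → f b = g b) (v : β a) :
    Function.update f a v = Function.update g a v := by
  funext b
  by_cases hb : b = a
  · subst hb
    simp only [update_self]
  · simp only [update_of_ne hb, h b hb]

namespace ExtGame

abbrev Profile {ι : Type} (G : ExtGame ι) : Type := ∀ i, G.Strategy i

section NodeProfile

variable {ι : Type} {m : ℕ} {ch : Fin (m + 1) → ExtGame ι}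

def nodeProfile (j : ι) (c : Fin (m + 1)) (π : ∀ x, Profile (ch x)) : Profile (node j m ch) :=
  fun i => ((fun _ => c, fun x => π x i) : (i = j → Fin (m + 1)) × ∀ x, (ch x).Strategy i)

theorem exists_eq_nodeProfile {j : ι} (σ : Profile (node j m ch)) :
    ∃ c π, σ = nodeProfile j c π :=
  ⟨(σ j).1 rfl, fun x i => (σ i).2 x,
    funext fun i => Prod.ext (funext fun h => by subst h; rfl) rfl⟩

theorem outcome_nodeProfile (j : ι) (c : Fin (m + 1)) (π : ∀ x, Profile (ch x)) :
    (node j m ch).outcome (nodeProfile j c π) = (ch c).outcome (π c) :=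
  rfl

theorem nodeProfile_apply_congr {j i : ι} {c c' : Fin (m + 1)} {π π' : ∀ x, Profile (ch x)}
    (hc : i = j → c' = c) (h : ∀ x, π' x i = π x i) :
    nodeProfile j c' π' i = nodeProfile j c π i :=
  Prod.ext (funext hc) (funext h)

end NodeProfile

open Function

section Stable

variable {ι : Type} [DecidableEq ι] {m : ℕ} {ch : Fin (m + 1) → ExtGame ι}

def StableOn (j : ι) (S : Finset (Fin (m + 1))) (c : Fin (m + 1)) (π : ∀ x, Profile (ch x)) :
    Prop :=
  (ch c).NashEq (π c) ∧
    ∀ x ∈ S, ∀ t, (ch x).outcome (update (π x) j t) j ≤ (ch c).outcome (π c) j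

theorem StableOn.insert_of_nashEq {j : ι} {S : Finset (Fin (m + 1))} {c x : Fin (m + 1)}
    {π : ∀ x, Profile (ch x)} (h : StableOn j S c π) (hx : (ch x).NashEq (π x))
    (hle : (ch x).outcome (π x) j ≤ (ch c).outcome (π c) j) :
    StableOn j (insert x S) c π := by
  refine ⟨h.1, fun y hy t => ?_⟩
  rcases Finset.mem_insert.1 hy with rfl | hy
  · exact (hx j t).trans hle
  · exact h.2 y hy t

theorem StableOn.mono {j : ι} {S : Finset (Fin (m + 1))} {c c' : Fin (m + 1)}
    {π π' : ∀ x, Profile (ch x)} (h : StableOn j S c π)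
    (hπ' : ∀ x ∈ S, ∀ i, i ≠ j → π' x i = π x i) (hc' : (ch c').NashEq (π' c'))
    (hle : (ch c).outcome (π c) j ≤ (ch c').outcome (π' c') j) :
    StableOn j S c' π' := by
  refine ⟨hc', fun x hx t => ?_⟩
  rw [update_eq_update_of_forall_ne (hπ' x hx)]
  exact (h.2 x hx t).trans hle

end Stable

variable {n : ℕ}

def WeaklyAcyclic (G : ExtGame (Fin n)) : Prop :=
  ∀ σ : Profile G, ∃ τ, Relation.ReflTransGen (ProfDev G) σ τ ∧ G.NashEq τ

theorem nashEq_iff_forall_not_profDev {G : ExtGame (Fin n)} {σ : Profile G} :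
    G.NashEq σ ↔ ∀ τ, ¬ ProfDev G σ τ := by
  refine ⟨fun hσ τ ⟨i, hτ, hlt⟩ => ?_, fun h i t => ?_⟩
  · rw [eq_update_iff.2 ⟨rfl, hτ⟩] at hlt
    exact (hσ i (τ i)).not_gt hlt
  · by_contra hlt
    exact h _ ⟨i, fun k hk => update_of_ne hk _ _, not_le.1 hlt⟩

section Improvement

variable {j : Fin n} {m : ℕ} {ch : Fin (m + 1) → ExtGame (Fin n)} {c c' : Fin (m + 1)}
  {π π' : ∀ x, Profile (ch x)}

theorem profDev_nodeProfile_update {a b : Profile (ch c)} (h : ProfDev (ch c) a b) :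
    ProfDev (node j m ch) (nodeProfile j c (update π c a)) (nodeProfile j c (update π c b)) := by
  obtain ⟨i, hab, hlt⟩ := h
  refine ⟨i, fun k hk => nodeProfile_apply_congr (fun _ => rfl) fun x => ?_,
    by simpa only [outcome_nodeProfile, update_self] using hlt⟩
  rcases eq_or_ne x c with rfl | hx
  · simpa only [update_self] using hab k hk
  · simp only [update_of_ne hx]

theorem reflTransGen_profDev_nodeProfile_update {a b : Profile (ch c)}
    (h : Relation.ReflTransGen (ProfDev (ch c)) a b) :
    Relation.ReflTransGen (ProfDev (node j m ch))
      (nodeProfile j c (update π c a)) (nodeProfile j c (update π c b)) := by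
  induction h with
  | refl => rfl
  | tail _ hbc ih => exact ih.tail (profDev_nodeProfile_update hbc)

theorem _root_.ProfDev.of_nodeProfile_same
    (h : ProfDev (node j m ch) (nodeProfile j c π) (nodeProfile j c π')) :
    ProfDev (ch c) (π c) (π' c) :=
  let ⟨i, hagree, hlt⟩ := h
  ⟨i, fun k hk => congrArg (fun s => s.2 c) (hagree k hk), hlt⟩

theorem _root_.ProfDev.of_nodeProfile_ne
    (h : ProfDev (node j m ch) (nodeProfile j c π) (nodeProfile j c' π')) (hc : c' ≠ c) :
    (∀ x, ∀ i, i ≠ j → π' x i = π x i) ∧ (ch c).outcome (π c) j < (ch c').outcome (π' c') j := by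
  obtain ⟨i, hagree, hlt⟩ := h
  obtain rfl : i = j := by
    by_contra hij
    exact hc (congrArg (fun s => s.1 rfl) (hagree j (Ne.symm hij)))
  exact ⟨fun x k hk => congrArg (fun s => s.2 x) (hagree k hk), hlt⟩

theorem profDev_nodeProfile_of_forall_ne (h : ∀ x, ∀ i, i ≠ j → π' x i = π x i)
    (hlt : (ch c).outcome (π c) j < (ch c').outcome (π' c') j) :
    ProfDev (node j m ch) (nodeProfile j c π) (nodeProfile j c' π') :=
  ⟨j, fun i hi => nodeProfile_apply_congr (fun h' => absurd h' hi) fun x => h x i hi, hlt⟩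

theorem StableOn.exists_eq_nodeProfile_of_profDev {S : Finset (Fin (m + 1))}
    (h : StableOn j S c π) {τ : Profile (node j m ch)}
    (hτ : ProfDev (node j m ch) (nodeProfile j c π) τ) :
    ∃ c₁ π₁, τ = nodeProfile j c₁ π₁ ∧ c₁ ≠ c ∧ c₁ ∉ S ∧ ∀ x, ∀ i, i ≠ j → π₁ x i = π x i := by
  obtain ⟨c₁, π₁, rfl⟩ := exists_eq_nodeProfile τ
  have hc₁ : c₁ ≠ c := by
    rintro rfl
    exact nashEq_iff_forall_not_profDev.1 h.1 _ hτ.of_nodeProfile_same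
  obtain ⟨hπ₁, hlt⟩ := hτ.of_nodeProfile_ne hc₁
  refine ⟨c₁, π₁, rfl, hc₁, fun hmem => ?_, hπ₁⟩
  have hle := h.2 c₁ hmem (π₁ c₁ j)
  rw [← update_eq_update_of_forall_ne (hπ₁ c₁), update_eq_self] at hle
  exact hle.not_gt hlt

theorem StableOn.exists_step (hch : ∀ x, (ch x).WeaklyAcyclic) {S : Finset (Fin (m + 1))}
    (h : StableOn j S c π) {τ : Profile (node j m ch)}
    (hτ : ProfDev (node j m ch) (nodeProfile j c π) τ) :
    ∃ c₁ ∉ S, ∃ c' π', Relation.ReflTransGen (ProfDev (node j m ch))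
      (nodeProfile j c π) (nodeProfile j c' π') ∧ StableOn j (insert c₁ S) c' π' := by
  obtain ⟨c₁, π₁, rfl, hc₁, hc₁S, hπ₁⟩ := h.exists_eq_nodeProfile_of_profDev hτ
  obtain ⟨t₁, ht₁, ht₁N⟩ := hch c₁ (π₁ c₁)
  have hpath := reflTransGen_profDev_nodeProfile_update (j := j) (π := π₁) ht₁
  rw [update_eq_self] at hpath
  have hπ₂ : ∀ x ∈ S, ∀ i, i ≠ j → update π₁ c₁ t₁ x i = π x i := fun x hx i hi => by
    rw [update_of_ne (ne_of_mem_of_not_mem hx hc₁S)]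
    exact hπ₁ x i hi
  refine ⟨c₁, hc₁S, ?_⟩
  by_cases hle : (ch c).outcome (π c) j ≤ (ch c₁).outcome t₁ j
  · refine ⟨c₁, update π₁ c₁ t₁, hpath.head hτ, ?_⟩
    have ht₁N' : (ch c₁).NashEq (update π₁ c₁ t₁ c₁) := by rwa [update_self]
    exact (h.mono hπ₂ ht₁N' (by rwa [update_self])).insert_of_nashEq ht₁N' le_rfl
  · have hback : ∀ x, ∀ i, i ≠ j →
        update (update π₁ c₁ t₁) c (π c) x i = update π₁ c₁ t₁ x i := fun x i hi => by
      rcases eq_or_ne x c with rfl | hx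
      · rw [update_self, update_of_ne hc₁.symm, hπ₁ x i hi]
      · rw [update_of_ne hx]
    refine ⟨c, update (update π₁ c₁ t₁) c (π c),
      (hpath.head hτ).tail (profDev_nodeProfile_of_forall_ne hback ?_), ?_⟩
    · rw [update_self, update_self]
      exact not_le.1 hle
    have hπ₃ : ∀ x ∈ S, ∀ i, i ≠ j → update (update π₁ c₁ t₁) c (π c) x i = π x i :=
      fun x hx i hi => (hback x i hi).trans (hπ₂ x hx i hi)
    have hc₁' : (ch c₁).NashEq (update (update π₁ c₁ t₁) c (π c) c₁) := by
      rwa [update_of_ne hc₁, update_self]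
    refine (h.mono hπ₃ (by rw [update_self]; exact h.1) (by rw [update_self])).insert_of_nashEq
      hc₁' ?_
    rw [update_of_ne hc₁, update_self, update_self]
    exact (not_le.1 hle).le

theorem StableOn.exists_reflTransGen_nashEq (hch : ∀ x, (ch x).WeaklyAcyclic)
    {S : Finset (Fin (m + 1))} {c : Fin (m + 1)} {π : ∀ x, Profile (ch x)}
    (h : StableOn j S c π) :
    ∃ τ, Relation.ReflTransGen (ProfDev (node j m ch)) (nodeProfile j c π) τ ∧
      (node j m ch).NashEq τ := by
  by_cases hdev : ∃ τ, ProfDev (node j m ch) (nodeProfile j c π) τ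
  · obtain ⟨τ, hτ⟩ := hdev
    obtain ⟨c₁, hc₁, c', π', hpath, h'⟩ := h.exists_step hch hτ
    obtain ⟨σ, hσ, hσN⟩ := h'.exists_reflTransGen_nashEq hch
    exact ⟨σ, hpath.trans hσ, hσN⟩
  · exact ⟨_, .refl, nashEq_iff_forall_not_profDev.2 (not_exists.1 hdev)⟩
termination_by Sᶜ.card
decreasing_by
  rw [Finset.compl_insert]
  exact Finset.card_erase_lt_of_mem (Finset.mem_compl.2 hc₁)

theorem weaklyAcyclic_node (hch : ∀ x, (ch x).WeaklyAcyclic) : (node j m ch).WeaklyAcyclic := by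
  intro σ
  obtain ⟨c, π, rfl⟩ := exists_eq_nodeProfile σ
  obtain ⟨t, ht, htN⟩ := hch c (π c)
  have hstable : StableOn j ∅ c (update π c t) :=
    ⟨by rwa [update_self], fun x hx => absurd hx (Finset.notMem_empty x)⟩
  obtain ⟨τ, hτ, hτN⟩ := hstable.exists_reflTransGen_nashEq hch
  have hpath := reflTransGen_profDev_nodeProfile_update (j := j) (π := π) ht
  rw [update_eq_self] at hpath
  exact ⟨τ, hpath.trans hτ, hτN⟩

end Improvement

theorem weaklyAcyclic (G : ExtGame (Fin n)) : G.WeaklyAcyclic := by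
  induction G with
  | leaf o => exact fun σ => ⟨σ, .refl, fun _ _ => le_rfl⟩
  | node j m ch ih => exact weaklyAcyclic_node ih

end ExtGame

/-- (Kukushkin) Every finite extensive game with perfect information is weakly acyclic:
from every joint strategy `σ` there is a finite improvement path, i.e. a finite sequence of
profitable deviations starting at `σ` and ending in a joint strategy admitting no
profitable deviation. -/
theorem extGame_weaklyAcyclic {n : ℕ} (G : ExtGame (Fin n)) (σ : ∀ j, G.Strategy j) :
    ∃ (k : ℕ) (f : Fin (k + 1) → ∀ j, G.Strategy j),
      f 0 = σ ∧ (∀ m : Fin k, ProfDev G (f m.castSucc) (f m.succ)) ∧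
      ¬ ∃ τ, ProfDev G (f (Fin.last k)) τ := by
  obtain ⟨τ, hpath, hτN⟩ := G.weaklyAcyclic σ
  obtain ⟨k, f, hf0, hlast, hstep⟩ := hpath.exists_fin_path
  rw [← hlast, ExtGame.nashEq_iff_forall_not_profDev] at hτN
  exact ⟨k, f, hf0, hstep, not_exists.2 hτN⟩
end
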